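/- Let M and N be positive definite Hermitian (n+1)×(n+1) matrices. Then tr(M⁻¹N) ≤ ((n+1)/n)·(tr(N⁻¹M))ⁿ · det(N)/det(M). -/

import Mathlib

/-!
Write `M = A²` with `A = √M`. Then `M⁻¹N = A⁻¹ B A` with `B = A⁻¹ N A⁻¹` positive definite, so
with `μ` the eigenvalues of `B` the three quantities are `tr(M⁻¹N) = ∑ μᵢ`, `tr(N⁻¹M) = ∑ μᵢ⁻¹`
and `det N / det M = ∏ μᵢ`. For the scalar inequality write `μᵢ = ∏ μ · ∏_{j ≠ i} μⱼ⁻¹` and apply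
AM-GM to the `n` remaining reciprocals: `μᵢ ≤ ∏ μ · (∑ μ⁻¹ / n)ⁿ`. Summing over the `n + 1`
indices and using `nⁿ ≥ n` gives the claim.
-/

open Matrix ComplexOrder Finset

theorem Real.prod_le_sum_div_card_pow {ι : Type*} (s : Finset ι) (z : ι → ℝ)
    (hz : ∀ i ∈ s, 0 ≤ z i) : ∏ i ∈ s, z i ≤ ((∑ i ∈ s, z i) / #s) ^ #s := by
  rcases s.eq_empty_or_nonempty with rfl | hs
  · simp
  have hk : (0 : ℝ) < #s := by exact_mod_cast hs.card_pos
  have hgm := Real.geom_mean_le_arith_mean s (fun _ ↦ 1) z (fun _ _ ↦ zero_le_one)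
    (by simpa using hk) hz
  simp only [Real.rpow_one, sum_const, nsmul_eq_mul, mul_one, one_mul] at hgm
  have hprod := prod_nonneg hz
  calc ∏ i ∈ s, z i = ((∏ i ∈ s, z i) ^ (#s : ℝ)⁻¹) ^ #s := by
        rw [← Real.rpow_natCast, ← Real.rpow_mul hprod, inv_mul_cancel₀ hk.ne', Real.rpow_one]
    _ ≤ _ := by gcongr

section

variable {ι : Type*} [Fintype ι] {n : ℕ} {μ : ι → ℝ}

theorem le_prod_mul_sum_inv_div_pow [DecidableEq ι] (hcard : Fintype.card ι = n + 1)
    (hμ : ∀ i, 0 < μ i) (i : ι) :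
    μ i ≤ (∏ j, μ j) * ((∑ j, (μ j)⁻¹) / n) ^ n := by
  have hcard' : #(univ.erase i) = n := by simp [card_erase_of_mem, hcard]
  have hinv : ∀ j, 0 ≤ (μ j)⁻¹ := fun j ↦ (inv_pos.2 (hμ j)).le
  have hsplit : μ i = (∏ j, μ j) * ∏ j ∈ univ.erase i, (μ j)⁻¹ := by
    rw [← mul_prod_erase univ μ (mem_univ i), prod_inv_distrib, mul_assoc,
      mul_inv_cancel₀ (prod_pos fun j _ ↦ hμ j).ne', mul_one]
  rw [hsplit]
  gcongr
  · exact (prod_pos fun j _ ↦ hμ j).le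
  calc ∏ j ∈ univ.erase i, (μ j)⁻¹ ≤ ((∑ j ∈ univ.erase i, (μ j)⁻¹) / n) ^ n := by
        simpa only [hcard'] using Real.prod_le_sum_div_card_pow (univ.erase i) _ fun j _ ↦ hinv j
    _ ≤ ((∑ j, (μ j)⁻¹) / n) ^ n := by
        gcongr
        · exact div_nonneg (sum_nonneg fun j _ ↦ hinv j) n.cast_nonneg
        · exact fun j _ _ ↦ hinv j
        · exact subset_univ _

theorem sum_le_card_div_mul_sum_inv_pow_mul_prod (hcard : Fintype.card ι = n + 1) (hn : 0 < n)
    (hμ : ∀ i, 0 < μ i) :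
    ∑ i, μ i ≤ ((n + 1 : ℝ) / n) * (∑ i, (μ i)⁻¹) ^ n * ∏ i, μ i := by
  classical
  have hP : 0 < ∏ i, μ i := prod_pos fun i _ ↦ hμ i
  have hS : 0 ≤ ∑ i, (μ i)⁻¹ := sum_nonneg fun i _ ↦ (inv_pos.2 (hμ i)).le
  have hn' : (0 : ℝ) < n := by exact_mod_cast hn
  calc ∑ i, μ i ≤ ∑ _i : ι, (∏ j, μ j) * ((∑ j, (μ j)⁻¹) / n) ^ n :=
        sum_le_sum fun i _ ↦ le_prod_mul_sum_inv_div_pow hcard hμ i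
    _ = (n + 1 : ℝ) / n ^ n * (∑ i, (μ i)⁻¹) ^ n * ∏ i, μ i := by
        rw [sum_const, card_univ, hcard, nsmul_eq_mul, div_pow]; push_cast; ring
    _ ≤ ((n + 1 : ℝ) / n) * (∑ i, (μ i)⁻¹) ^ n * ∏ i, μ i := by
        gcongr
        exact_mod_cast Nat.le_self_pow hn.ne' n

end

namespace Matrix

variable {m 𝕜 : Type*} [Fintype m] [DecidableEq m] [RCLike 𝕜]

theorem IsHermitian.trace_cfc {A : Matrix m m 𝕜} (hA : A.IsHermitian) (f : ℝ → ℝ) :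
    (cfc f A).trace = ∑ i, (f (hA.eigenvalues i) : 𝕜) := by
  rw [hA.cfc_eq, IsHermitian.cfc, Unitary.conjStarAlgAut_apply, trace_mul_cycle,
    Unitary.star_mul_self_of_mem (hA.eigenvectorUnitary).2, one_mul, trace_diagonal]
  rfl

theorem PosDef.trace_inv {A : Matrix m m 𝕜} (hA : A.PosDef) :
    A⁻¹.trace = ∑ i, ((hA.isHermitian.eigenvalues i)⁻¹ : 𝕜) := by
  rw [nonsing_inv_eq_ringInverse,
    ← cfc_ringInverse_id (R := ℝ) A hA.isUnit hA.isHermitian.isSelfAdjoint,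
    hA.isHermitian.trace_cfc]
  simp

open scoped MatrixOrder in
theorem PosDef.exists_posDef_inv_mul_eq_conj {M N : Matrix m m 𝕜} (hM : M.PosDef)
    (hN : N.PosDef) : ∃ A B : Matrix m m 𝕜, IsUnit A ∧ B.PosDef ∧ M⁻¹ * N = A⁻¹ * B * A := by
  set A := CFC.sqrt M
  have hAA : A * A = M := CFC.sqrt_mul_sqrt_self M hM.posSemidef.nonneg
  have hA : IsUnit A := (CFC.isUnit_sqrt_iff M hM.posSemidef.nonneg).2 hM.isUnit
  have hAinv : (A⁻¹)ᴴ = A⁻¹ := ((CFC.sqrt_nonneg M).posSemidef.isHermitian.inv).eq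
  refine ⟨A, A⁻¹ * N * A⁻¹, hA, ?_, ?_⟩
  · simpa only [hAinv] using hN.conjTranspose_mul_mul_same (B := A⁻¹)
      (mulVec_injective_of_isUnit (isUnit_nonsing_inv_iff.2 hA))
  · rw [← hAA, mul_inv_rev, Matrix.mul_assoc, Matrix.mul_assoc, Matrix.mul_assoc,
      nonsing_inv_mul _ ((isUnit_iff_isUnit_det A).1 hA), Matrix.mul_one]

end Matrix

/-- For positive definite Hermitian `(n+1)×(n+1)` matrices `M` and `N` (with `n ≥ 1`),
`tr(M⁻¹N) ≤ ((n+1)/n)·(tr(N⁻¹M))ⁿ · det N / det M`. -/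
theorem trace_det_inequality (n : ℕ) (hn : 0 < n)
    (M N : Matrix (Fin (n + 1)) (Fin (n + 1)) ℂ) (hM : M.PosDef) (hN : N.PosDef) :
    (M⁻¹ * N).trace.re ≤
      ((n + 1 : ℝ) / n) * ((N⁻¹ * M).trace.re) ^ n * (N.det.re / M.det.re) := by
  obtain ⟨A, B, hA, hB, hMN⟩ := hM.exists_posDef_inv_mul_eq_conj hN
  have hMdet : IsUnit M.det := (isUnit_iff_isUnit_det M).1 hM.isUnit
  have hNM : N⁻¹ * M = A⁻¹ * B⁻¹ * A := by
    rw [← nonsing_inv_nonsing_inv M hMdet, ← Matrix.mul_inv_rev, hMN, Matrix.mul_inv_rev,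
      Matrix.mul_inv_rev, nonsing_inv_nonsing_inv A ((isUnit_iff_isUnit_det A).1 hA),
      Matrix.mul_assoc]
  have hdet : N.det = M.det * B.det := by
    rw [← det_conj' hA B, ← hMN, det_mul, ← mul_assoc, ← det_mul, mul_nonsing_inv M hMdet,
      det_one, one_mul]
  have hsum : (M⁻¹ * N).trace.re = ∑ i, hB.isHermitian.eigenvalues i := by
    rw [hMN, trace_conj' hA, hB.isHermitian.trace_eq_sum_eigenvalues]
    simp
  have hsum_inv : (N⁻¹ * M).trace.re = ∑ i, (hB.isHermitian.eigenvalues i)⁻¹ := by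
    rw [hNM, trace_conj' hA, hB.trace_inv]
    simp
  have hprod : N.det.re / M.det.re = ∏ i, hB.isHermitian.eigenvalues i := by
    rw [hdet, hB.isHermitian.det_eq_prod_eigenvalues, ← RCLike.ofReal_prod, RCLike.ofReal_eq_complex_ofReal, Complex.re_mul_ofReal,
      mul_div_cancel_left₀ _ (Complex.pos_iff.1 hM.det_pos).1.ne']
  rw [hsum, hsum_inv, hprod]
  exact sum_le_card_div_mul_sum_inv_pow_mul_prod (Fintype.card_fin _) hn hB.eigenvalues_pos
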